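/- arXiv:1804.03123 — 4 statements merged into one kernel-verified Lean document; each statement's English description precedes it below -/
import Mathlib

section
/- Let Γ be a finite simplicial graph, K ⊆ Γ a clique with vertices v₁, …, v_k, and φ : W_Γ → W_K the retraction homomorphism (v ↦ v for v ∈ K, v ↦ 1 otherwise). For ε ∈ (ℤ/2)^k write g(ε) = v₁^{ε₁} ⋯ v_k^{ε_k} ∈ W_Γ. Then ker φ is generated by the set T = { g(ε) v g(ε) : v ∈ V(Γ) \ V(K), ε ∈ (ℤ/2)^k }. -/
/-- The defining relators of the right-angled Coxeter group of a simplicial graph `G`. -/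
def racgRels {V : Type} (G : SimpleGraph V) : Set (FreeGroup V) :=
  {r | (∃ v : V, r = FreeGroup.of v * FreeGroup.of v) ∨
    ∃ u v : V, G.Adj u v ∧ r = (FreeGroup.of u * FreeGroup.of v) ^ 2}

/-- The right-angled Coxeter group of a finite simplicial graph. -/
abbrev RACG {V : Type} (G : SimpleGraph V) : Type := PresentedGroup (racgRels G)

/-- For clique vertices `v₁, …, v_k` (given by `vv : Fin k → V`) and `ε ∈ (ℤ/2)^k`, the element
`g(ε) = v₁^{ε₁} ⋯ v_k^{ε_k}` of `W_Γ`. -/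
def gElt {V : Type} (G : SimpleGraph V) {k : ℕ} (vv : Fin k → V)
    (ε : Fin k → ZMod 2) : RACG G :=
  (List.ofFn fun i => (PresentedGroup.of (vv i) : RACG G) ^ (ε i).val).prod

lemma racg_rel_one {V : Type} {G : SimpleGraph V} {r : FreeGroup V} (h : r ∈ racgRels G) :
    PresentedGroup.mk (racgRels G) r = 1 :=
  (QuotientGroup.eq_one_iff r).mpr (Subgroup.subset_normalClosure h)

lemma racg_of_sq {V : Type} (G : SimpleGraph V) (v : V) :
    (PresentedGroup.of v : RACG G) ^ 2 = 1 := by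
  rw [pow_two]
  show PresentedGroup.mk (racgRels G) (FreeGroup.of v) *
    PresentedGroup.mk (racgRels G) (FreeGroup.of v) = 1
  rw [← map_mul]
  exact racg_rel_one (Or.inl ⟨v, rfl⟩)

lemma racg_adj_sq {V : Type} (G : SimpleGraph V) {u v : V} (h : G.Adj u v) :
    ((PresentedGroup.of u : RACG G) * PresentedGroup.of v) ^ 2 = 1 := by
  show ((PresentedGroup.mk (racgRels G) (FreeGroup.of u)) *
    PresentedGroup.mk (racgRels G) (FreeGroup.of v)) ^ 2 = 1
  rw [← map_mul, ← map_pow]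
  exact racg_rel_one (Or.inr ⟨u, v, h, rfl⟩)

lemma racg_comm {V : Type} (G : SimpleGraph V) {u v : V} (h : G.Adj u v) :
    Commute (PresentedGroup.of u : RACG G) (PresentedGroup.of v) := by
  have hu := racg_of_sq G u
  have hv := racg_of_sq G v
  have huv := racg_adj_sq G h
  have hiu : (PresentedGroup.of u : RACG G)⁻¹ = PresentedGroup.of u :=
    inv_eq_of_mul_eq_one_right (by rw [← pow_two]; exact hu)
  have hiv : (PresentedGroup.of v : RACG G)⁻¹ = PresentedGroup.of v :=
    inv_eq_of_mul_eq_one_right (by rw [← pow_two]; exact hv)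
  have huv' : (PresentedGroup.of u * PresentedGroup.of v : RACG G)⁻¹ =
      PresentedGroup.of u * PresentedGroup.of v :=
    inv_eq_of_mul_eq_one_right (by rw [← pow_two]; exact huv)
  unfold Commute SemiconjBy
  calc (PresentedGroup.of u : RACG G) * PresentedGroup.of v
      = (PresentedGroup.of u * PresentedGroup.of v : RACG G)⁻¹ := huv'.symm
    _ = (PresentedGroup.of v)⁻¹ * (PresentedGroup.of u)⁻¹ := mul_inv_rev _ _
    _ = PresentedGroup.of v * PresentedGroup.of u := by rw [hiu, hiv]

lemma listProd_mul {G' : Type*} [Group G'] :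
    ∀ {k : ℕ} (a : Fin k → G'), (∀ i j, i ≠ j → Commute (a i) (a j)) →
    (∀ i, a i ^ 2 = 1) → ∀ ε δ : Fin k → ZMod 2,
    (List.ofFn fun i => a i ^ (ε i).val).prod * (List.ofFn fun i => a i ^ (δ i).val).prod
      = (List.ofFn fun i => a i ^ ((ε + δ) i).val).prod := by
  intro k
  induction k with
  | zero => intro a _ _ ε δ; simp
  | succ n ih =>
    intro a hc hs ε δ
    have hc' : ∀ i j : Fin n, i ≠ j → Commute (a i.succ) (a j.succ) := fun i j h =>
      hc _ _ (fun e => h (Fin.succ_injective n e))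
    have key := ih (fun i => a i.succ) hc' (fun i => hs _) (fun i => ε i.succ) (fun i => δ i.succ)
    rw [List.ofFn_succ, List.ofFn_succ, List.ofFn_succ, List.prod_cons, List.prod_cons,
      List.prod_cons]
    have hcomm0 : Commute (a 0 ^ (δ 0).val)
        ((List.ofFn fun i : Fin n => a i.succ ^ (ε i.succ).val).prod) := by
      apply Commute.list_prod_right
      intro x hx
      rw [List.mem_ofFn] at hx
      obtain ⟨i, rfl⟩ := hx
      exact (hc 0 i.succ (Fin.succ_ne_zero i).symm).pow_pow _ _
    calc a 0 ^ (ε 0).val * (List.ofFn fun i : Fin n => a i.succ ^ (ε i.succ).val).prod *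
          (a 0 ^ (δ 0).val * (List.ofFn fun i : Fin n => a i.succ ^ (δ i.succ).val).prod)
        = a 0 ^ (ε 0).val * ((List.ofFn fun i : Fin n => a i.succ ^ (ε i.succ).val).prod *
            a 0 ^ (δ 0).val) * (List.ofFn fun i : Fin n => a i.succ ^ (δ i.succ).val).prod := by
          group
      _ = a 0 ^ (ε 0).val * (a 0 ^ (δ 0).val *
            (List.ofFn fun i : Fin n => a i.succ ^ (ε i.succ).val).prod) *
            (List.ofFn fun i : Fin n => a i.succ ^ (δ i.succ).val).prod := by
          rw [hcomm0.eq]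
      _ = (a 0 ^ (ε 0).val * a 0 ^ (δ 0).val) *
            ((List.ofFn fun i : Fin n => a i.succ ^ (ε i.succ).val).prod *
             (List.ofFn fun i : Fin n => a i.succ ^ (δ i.succ).val).prod) := by group
      _ = a 0 ^ ((ε + δ) 0).val *
            (List.ofFn fun i : Fin n => a i.succ ^ ((ε + δ) i.succ).val).prod := by
          rw [← pow_add, key]
          congr 1
          rw [Pi.add_apply, ZMod.val_add, ← pow_eq_pow_mod _ (hs 0)]

lemma listProd_single {G' : Type*} [Group G'] :
    ∀ {k : ℕ} (a : Fin k → G') (i : Fin k),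
    (List.ofFn fun j => a j ^ ((Pi.single i (1 : ZMod 2) : Fin k → ZMod 2) j).val).prod = a i := by
  intro k
  induction k with
  | zero => exact fun a i => i.elim0
  | succ n ih =>
    intro a i
    rw [List.ofFn_succ, List.prod_cons]
    induction i using Fin.cases with
    | zero =>
      have h1 : ∀ j : Fin n,
          (Pi.single (0 : Fin (n+1)) (1 : ZMod 2) : Fin (n+1) → ZMod 2) j.succ = 0 := fun j =>
        Pi.single_eq_of_ne (Fin.succ_ne_zero j) _
      simp [h1, show ((1:ZMod 2)).val = 1 from rfl]
    | succ j =>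
      have h1 : ∀ m : Fin n, (Pi.single (Fin.succ j) (1 : ZMod 2) : Fin (n+1) → ZMod 2) m.succ
          = (Pi.single j (1 : ZMod 2) : Fin n → ZMod 2) m := by
        intro m
        by_cases h : m = j
        · subst h; simp
        · rw [Pi.single_eq_of_ne h, Pi.single_eq_of_ne (fun e => h (Fin.succ_injective n e))]
      have h0 : (Pi.single (Fin.succ j) (1 : ZMod 2) : Fin (n+1) → ZMod 2) 0 = 0 :=
        Pi.single_eq_of_ne (Fin.succ_ne_zero j).symm _
      rw [h0]
      simp only [h1]
      rw [ih (fun m => a m.succ) j]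
      simp

/-- the kernel of the retraction `φ : W_Γ →* W_K` onto a clique
`K = {v₁, …, v_k}` is generated by the set `T = { g(ε) v g(ε) : v ∈ V(Γ)\V(K), ε ∈ (ℤ/2)^k }`. -/
theorem racg_retraction_ker_generated {V : Type} [Fintype V] (G : SimpleGraph V)
    (k : ℕ) (vv : Fin k → V) (hinj : Function.Injective vv)
    (hclique : ∀ i j : Fin k, i ≠ j → G.Adj (vv i) (vv j))
    (φ : RACG G →* RACG (G.induce (Set.range vv)))
    (hφ1 : ∀ i : Fin k, φ (PresentedGroup.of (vv i)) =
      PresentedGroup.of (⟨vv i, Set.mem_range_self i⟩ : ↥(Set.range vv)))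
    (hφ2 : ∀ v : V, v ∉ Set.range vv → φ (PresentedGroup.of v) = 1) :
    φ.ker = Subgroup.closure
      {x : RACG G | ∃ (ε : Fin k → ZMod 2) (v : V), v ∉ Set.range vv ∧
        x = gElt G vv ε * PresentedGroup.of v * gElt G vv ε} := by
  set T : Set (RACG G) := {x : RACG G | ∃ (ε : Fin k → ZMod 2) (v : V), v ∉ Set.range vv ∧
    x = gElt G vv ε * PresentedGroup.of v * gElt G vv ε} with hTdef
  set N : Subgroup (RACG G) := Subgroup.closure T with hNdef
  -- basic facts
  have hsq : ∀ i : Fin k, (PresentedGroup.of (vv i) : RACG G) ^ 2 = 1 :=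
    fun i => racg_of_sq G (vv i)
  have hcm : ∀ i j : Fin k, i ≠ j →
      Commute (PresentedGroup.of (vv i) : RACG G) (PresentedGroup.of (vv j)) :=
    fun i j h => racg_comm G (hclique i j h)
  have hmul : ∀ ε δ : Fin k → ZMod 2, gElt G vv ε * gElt G vv δ = gElt G vv (ε + δ) :=
    fun ε δ => listProd_mul (fun i => PresentedGroup.of (vv i)) hcm hsq ε δ
  have hzero : gElt G vv 0 = 1 := by
    unfold gElt
    simp [ZMod.val_zero]
  have hgg : ∀ ε : Fin k → ZMod 2, gElt G vv ε * gElt G vv ε = 1 := by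
    intro ε
    rw [hmul]
    have : ε + ε = 0 := by
      funext i
      exact CharTwo.add_self_eq_zero (ε i)
    rw [this, hzero]
  have hginv : ∀ ε : Fin k → ZMod 2, (gElt G vv ε)⁻¹ = gElt G vv ε :=
    fun ε => inv_eq_of_mul_eq_one_right (hgg ε)
  have hsingle : ∀ i : Fin k, gElt G vv (Pi.single i 1) = PresentedGroup.of (vv i) :=
    fun i => listProd_single (fun i => PresentedGroup.of (vv i)) i
  -- N ≤ ker φ
  have le₁ : N ≤ φ.ker := by
    rw [hNdef]
    apply (Subgroup.closure_le _).mpr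
    rintro x ⟨ε, v, hv, rfl⟩
    have : φ (gElt G vv ε * PresentedGroup.of v * gElt G vv ε) = 1 := by
      rw [map_mul, map_mul, hφ2 v hv, mul_one, ← map_mul, hgg, map_one]
    exact this
  -- the retraction section ψ
  have hrel : ∀ r ∈ racgRels (G.induce (Set.range vv)),
      FreeGroup.lift (fun x : ↥(Set.range vv) => (PresentedGroup.of (x : V) : RACG G)) r = 1 := by
    rintro r (⟨u, rfl⟩ | ⟨u, w, hw, rfl⟩)
    · simp only [map_mul, FreeGroup.lift_apply_of]
      rw [← pow_two]
      exact racg_of_sq G u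
    · simp only [map_pow, map_mul, FreeGroup.lift_apply_of]
      exact racg_adj_sq G hw
  set ψ : RACG (G.induce (Set.range vv)) →* RACG G := PresentedGroup.toGroup hrel with hψdef
  have hψ : ∀ x : ↥(Set.range vv), ψ (PresentedGroup.of x) = PresentedGroup.of (x : V) :=
    fun x => PresentedGroup.toGroup.of hrel
  have hφg : ∀ ε : Fin k → ZMod 2, φ (gElt G vv ε) =
      (List.ofFn fun i => (PresentedGroup.of (⟨vv i, Set.mem_range_self i⟩ : ↥(Set.range vv)) :
        RACG (G.induce (Set.range vv))) ^ (ε i).val).prod := by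
    intro ε
    unfold gElt
    rw [map_list_prod, List.map_ofFn]
    have hfun : (⇑φ ∘ fun i => (PresentedGroup.of (vv i) : RACG G) ^ (ε i).val) =
        fun i => (PresentedGroup.of (⟨vv i, Set.mem_range_self i⟩ : ↥(Set.range vv)) :
          RACG (G.induce (Set.range vv))) ^ (ε i).val := by
      funext i
      simp only [Function.comp_apply, map_pow, hφ1]
    rw [hfun]
  have hψφg : ∀ ε : Fin k → ZMod 2, ψ (φ (gElt G vv ε)) = gElt G vv ε := by
    intro ε
    rw [hφg, map_list_prod, List.map_ofFn]
    unfold gElt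
    have hfun : (⇑ψ ∘ fun i => (PresentedGroup.of (⟨vv i, Set.mem_range_self i⟩ :
        ↥(Set.range vv)) : RACG (G.induce (Set.range vv))) ^ (ε i).val) =
        fun i => (PresentedGroup.of (vv i) : RACG G) ^ (ε i).val := by
      funext i
      simp only [Function.comp_apply, map_pow, hψ]
    rw [hfun]
  -- N is stable under conjugation by gElt
  have hconj : ∀ (ε : Fin k → ZMod 2) (n : RACG G), n ∈ N →
      gElt G vv ε * n * gElt G vv ε ∈ N := by
    intro ε n hn
    induction hn using Subgroup.closure_induction with
    | mem x hx =>
      obtain ⟨δ, v, hv, rfl⟩ := hx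
      apply Subgroup.subset_closure
      refine ⟨ε + δ, v, hv, ?_⟩
      calc gElt G vv ε * (gElt G vv δ * PresentedGroup.of v * gElt G vv δ) * gElt G vv ε
          = (gElt G vv ε * gElt G vv δ) * PresentedGroup.of v *
            (gElt G vv δ * gElt G vv ε) := by group
        _ = gElt G vv (ε + δ) * PresentedGroup.of v * gElt G vv (δ + ε) := by rw [hmul, hmul]
        _ = gElt G vv (ε + δ) * PresentedGroup.of v * gElt G vv (ε + δ) := by
            rw [add_comm δ ε]
    | one => rw [mul_one, hgg]; exact one_mem N
    | mul x y hx hy ihx ihy =>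
      have : gElt G vv ε * (x * y) * gElt G vv ε =
          (gElt G vv ε * x * gElt G vv ε) * (gElt G vv ε * y * gElt G vv ε) := by
        calc gElt G vv ε * (x * y) * gElt G vv ε
            = gElt G vv ε * x * 1 * y * gElt G vv ε := by group
          _ = gElt G vv ε * x * (gElt G vv ε * gElt G vv ε) * y * gElt G vv ε := by rw [hgg]
          _ = (gElt G vv ε * x * gElt G vv ε) * (gElt G vv ε * y * gElt G vv ε) := by group
      rw [this]
      exact mul_mem ihx ihy
    | inv x hx ihx =>
      have : gElt G vv ε * x⁻¹ * gElt G vv ε = (gElt G vv ε * x * gElt G vv ε)⁻¹ := by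
        rw [mul_inv_rev, mul_inv_rev, hginv]
        group
      rw [this]
      exact inv_mem ihx
  -- the subgroup of elements of the form n * g(ε)
  let S : Subgroup (RACG G) :=
    { carrier := {w : RACG G | ∃ n ∈ N, ∃ ε : Fin k → ZMod 2, w = n * gElt G vv ε}
      one_mem' := ⟨1, one_mem N, 0, by rw [hzero, one_mul]⟩
      mul_mem' := by
        rintro x y ⟨n1, hn1, ε1, rfl⟩ ⟨n2, hn2, ε2, rfl⟩
        refine ⟨n1 * (gElt G vv ε1 * n2 * gElt G vv ε1),
          mul_mem hn1 (hconj ε1 n2 hn2), ε1 + ε2, ?_⟩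
        rw [← hmul]
        have e : n1 * (gElt G vv ε1 * n2 * gElt G vv ε1) * (gElt G vv ε1 * gElt G vv ε2)
            = n1 * gElt G vv ε1 * n2 * (gElt G vv ε1 * gElt G vv ε1) * gElt G vv ε2 := by group
        rw [e, hgg, mul_one]
        group
      inv_mem' := by
        rintro x ⟨n, hn, ε, rfl⟩
        refine ⟨gElt G vv ε * n⁻¹ * gElt G vv ε, hconj ε n⁻¹ (inv_mem hn), ε, ?_⟩
        calc (n * gElt G vv ε)⁻¹ = (gElt G vv ε)⁻¹ * n⁻¹ := mul_inv_rev _ _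
          _ = gElt G vv ε * n⁻¹ := by rw [hginv]
          _ = gElt G vv ε * n⁻¹ * (gElt G vv ε * gElt G vv ε) := by rw [hgg, mul_one]
          _ = gElt G vv ε * n⁻¹ * gElt G vv ε * gElt G vv ε := by group }
  have hrep : ∀ w : RACG G, ∃ n ∈ N, ∃ ε : Fin k → ZMod 2, w = n * gElt G vv ε := by
    intro w
    refine PresentedGroup.generated_by _ S ?_ w
    intro v
    by_cases hv : v ∈ Set.range vv
    · obtain ⟨i, rfl⟩ := hv
      exact ⟨1, one_mem N, Pi.single i 1, by rw [hsingle, one_mul]⟩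
    · refine ⟨gElt G vv 0 * PresentedGroup.of v * gElt G vv 0,
        Subgroup.subset_closure ⟨0, v, hv, rfl⟩, 0, ?_⟩
      rw [hzero]
      group
  -- conclusion
  apply le_antisymm _ le₁
  intro w hw
  obtain ⟨n, hn, ε, rfl⟩ := hrep w
  have hφn : φ n = 1 := le₁ hn
  have h1 : φ (gElt G vv ε) = 1 := by
    have := hw
    rw [MonoidHom.mem_ker, map_mul, hφn, one_mul] at this
    exact this
  have h2 : gElt G vv ε = 1 := by
    rw [← hψφg ε, h1, map_one]
  rw [h2, mul_one]
  exact hn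
end

section
/- Let Γ be the graph of a generalized m-gon and suppose the edges of the Davis complex Σ_Γ are 2-colored (red/blue, according to the bipartition of Γ) so that in every square, adjacent edges have different colors. If l is a labeling of Σ_Γ by ℤ/4 (edges of every square cyclically labeled 1,2,3,4, edges at any one vertex using exactly two consecutive labels, same-label edges at a vertex having the same color), then for any two edges e, e' of Σ_Γ: if l(e) and l(e') have the same parity then e, e' have the same color, and if l(e) and l(e') have different parity then e, e' have different colors. -/
/-- A combinatorial square complex: vertices `V`, edges `E` (with endpoints in `Sym2 V`) and
squares `S`, each square having four boundary vertices and four boundary edges indexed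
cyclically by `ZMod 4`, the `i`-th edge joining the `i`-th and `(i+1)`-st vertices.
This models the Davis complex `Σ_Γ`. -/
structure SquareComplex (V E S : Type) where
  ends : E → Sym2 V
  sq : S → ZMod 4 → E
  sqv : S → ZMod 4 → V
  sq_ends : ∀ (s : S) (i : ZMod 4), ends (sq s i) = s(sqv s i, sqv s (i + 1))

/-- Incidence of an edge to a vertex. -/
def SquareComplex.Inc {V E S : Type} (X : SquareComplex V E S) (e : E) (v : V) : Prop :=
  v ∈ X.ends e

/-- suppose the edges of the Davis complex are 2-colored (`true` = red,
`false` = blue, from the bipartition of `Γ`) so that adjacent edges of every square have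
different colors, and `l` is a labeling by `ℤ/4`: the edges of every square are labeled
cyclically `1,2,3,4`; at each vertex the labels used are two consecutive values, and two
edges at a vertex have equal labels iff they have the same color.  Then (on the connected
complex) edges whose labels have the same parity have the same color, and edges whose labels
have different parity have different colors. -/
theorem labeling_parity_determines_color {V E S : Type} (X : SquareComplex V E S)
    (c : E → Bool)
    (hsqcol : ∀ (s : S) (i : ZMod 4), c (X.sq s i) ≠ c (X.sq s (i + 1)))
    (l : E → ZMod 4)
    (hsq : ∀ (s : S) (i : ZMod 4), l (X.sq s (i + 1)) = l (X.sq s i) + 1)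
    (hvtx : ∀ (v : V) (e e' : E), X.Inc e v → X.Inc e' v → (l e = l e' ↔ c e = c e'))
    (hconsec : ∀ (v : V) (e e' : E), X.Inc e v → X.Inc e' v →
      l e = l e' ∨ l e' = l e + 1 ∨ l e = l e' + 1)
    (hconn : ∀ e e' : E,
      Relation.ReflTransGen (fun a b => ∃ v : V, X.Inc a v ∧ X.Inc b v) e e') :
    ∀ e e' : E,
      ((l e).val % 2 = (l e').val % 2 → c e = c e') ∧
      ((l e).val % 2 ≠ (l e').val % 2 → c e ≠ c e') := by

  -- invariant: parity of label XOR color is constant on adjacent edges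
  have key : ∀ a b : E, (∃ v : V, X.Inc a v ∧ X.Inc b v) →
      ((decide ((l a).val % 2 = 0)) == c a) = ((decide ((l b).val % 2 = 0)) == c b) := by
    rintro a b ⟨v, ha, hb⟩
    have hpar : ∀ x y : ZMod 4, y = x + 1 → x.val % 2 ≠ y.val % 2 := by decide
    have hne1 : ∀ x y : ZMod 4, y = x + 1 → x ≠ y := by decide
    rcases hconsec v a b ha hb with h | h | h
    · have hc : c a = c b := (hvtx v a b ha hb).1 h
      rw [h, hc]
    · have hp := hpar _ _ h
      have hc : c a ≠ c b := fun hcc => hne1 _ _ h ((hvtx v a b ha hb).2 hcc)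
      revert hp hc
      have h1 : (l a).val % 2 = 0 ∨ (l a).val % 2 = 1 := by omega
      have h2 : (l b).val % 2 = 0 ∨ (l b).val % 2 = 1 := by omega
      rcases h1 with h1 | h1 <;> rcases h2 with h2 | h2 <;>
        rcases Bool.eq_false_or_eq_true (c a) with hca | hca <;>
        rcases Bool.eq_false_or_eq_true (c b) with hcb | hcb <;>
        simp [h1, h2, hca, hcb]
    · have hp := hpar _ _ h
      have hc : c a ≠ c b := fun hcc => (hne1 _ _ h ((hvtx v a b ha hb).2 hcc).symm)
      revert hp hc
      have h1 : (l a).val % 2 = 0 ∨ (l a).val % 2 = 1 := by omega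
      have h2 : (l b).val % 2 = 0 ∨ (l b).val % 2 = 1 := by omega
      rcases h1 with h1 | h1 <;> rcases h2 with h2 | h2 <;>
        rcases Bool.eq_false_or_eq_true (c a) with hca | hca <;>
        rcases Bool.eq_false_or_eq_true (c b) with hcb | hcb <;>
        simp [h1, h2, hca, hcb]
  intro e e'
  have hconst : ((decide ((l e).val % 2 = 0)) == c e) = ((decide ((l e').val % 2 = 0)) == c e') := by
    induction hconn e e' with
    | refl => rfl
    | tail _ hab ih => exact ih.trans (key _ _ hab)
  constructor <;> intro hp
  · revert hconst
    have h1 : (l e).val % 2 = 0 ∨ (l e).val % 2 = 1 := by omega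
    have h2 : (l e').val % 2 = 0 ∨ (l e').val % 2 = 1 := by omega
    rcases h1 with h1 | h1 <;> rcases h2 with h2 | h2 <;>
      rcases Bool.eq_false_or_eq_true (c e) with hca | hca <;>
      rcases Bool.eq_false_or_eq_true (c e') with hcb | hcb <;>
      simp_all
  · revert hconst
    have h1 : (l e).val % 2 = 0 ∨ (l e).val % 2 = 1 := by omega
    have h2 : (l e').val % 2 = 0 ∨ (l e').val % 2 = 1 := by omega
    rcases h1 with h1 | h1 <;> rcases h2 with h2 | h2 <;>
      rcases Bool.eq_false_or_eq_true (c e) with hca | hca <;>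
      rcases Bool.eq_false_or_eq_true (c e') with hcb | hcb <;>
      simp_all
end

section
/- Let m ≥ 2 be an integer and let L be a finite generalized thick m-gon with red/blue bipartition. Then there exist integers r, b ≥ 2 such that every red vertex of L is contained in exactly r+1 edges and every blue vertex is contained in exactly b+1 edges; moreover if m is odd then r = b. -/
/-!
Rigidity of the `2m`-cycles forces girth `≥ 2m`, and since any two vertices lie on a common
`2m`-cycle the diameter is `≤ m`. So every vertex has an opposite vertex at distance `m`, and
geodesics of length `< m` are unique. Matching neighbours along geodesics shows that opposite
vertices have the same valence, and by thickness two vertices with a common neighbour have a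
common opposite vertex. Hence the valence is constant on each colour class, and for odd `m`
opposite vertices have different colours.
-/

namespace SimpleGraph

variable {V : Type*} {G : SimpleGraph V}

namespace Walk

theorem IsCycle.eq_snd_or_eq_penultimate_of_mem_edges {u y : V} {c : G.Walk u u}
    (hc : c.IsCycle) (h : s(u, y) ∈ c.edges) : y = c.snd ∨ y = c.penultimate := by
  rw [← c.cons_tail_eq hc.not_nil, edges_cons, List.mem_cons, Sym2.eq_iff] at h
  rcases h with (⟨-, rfl⟩ | ⟨hu, -⟩) | h
  · exact .inl rfl
  · exact ((c.adj_snd hc.not_nil).ne hu).elim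
  · have := hc.three_le_length
    right
    simpa [show c.length - 1 - 1 + 1 = c.length - 1 by omega] using
      hc.isPath_tail.eq_penultimate_of_mem_edges h

theorem IsCycle.eq_getVert_sub_one_or_add_one_of_mem_edges {u y : V} {c : G.Walk u u}
    (hc : c.IsCycle) {i : ℕ} (hi₀ : 0 < i) (hi : i < c.length)
    (h : s(c.getVert i, y) ∈ c.edges) : y = c.getVert (i - 1) ∨ y = c.getVert (i + 1) := by
  obtain ⟨j, hj, hji⟩ := c.mk_mem_edges_iff_exists.1 h
  rcases Sym2.eq_iff.1 hji with ⟨hj₁, rfl⟩ | ⟨rfl, hj₁⟩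
  · have : j = i := hc.getVert_injOn' (by simp; omega) (by simp; omega) hj₁
    exact .inr (by rw [this])
  · have : j + 1 = i := hc.getVert_injOn (by simp; omega) (by simp; omega) hj₁
    exact .inl (by rw [← this, Nat.add_sub_cancel])

theorem IsCycle.exists_isCycle_snd_eq {v a b : V} {c : G.Walk v v} (hc : c.IsCycle)
    (h : s(a, b) ∈ c.edges) :
    ∃ c' : G.Walk a a, c'.IsCycle ∧ c'.length = c.length ∧
      (∀ e ∈ c.edges, e ∈ c'.edges) ∧ c'.snd = b := by
  classical
  have ha := c.fst_mem_support_of_mem_edges h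
  have hrot : ∀ e ∈ c.edges, e ∈ (c.rotate a ha).edges := fun e =>
    (c.rotate_edges a ha).mem_iff.2
  rcases (hc.rotate ha).eq_snd_or_eq_penultimate_of_mem_edges (hrot _ h) with hb | hb
  · exact ⟨_, hc.rotate ha, c.length_rotate a ha, hrot, hb.symm⟩
  · refine ⟨_, (hc.rotate ha).reverse, by simp, fun e he => ?_, by simp [hb]⟩
    simpa using hrot e he

theorem two_mul_dist_le_length {u x : V} (c : G.Walk u u) (hx : x ∈ c.support) :
    2 * G.dist u x ≤ c.length := by
  obtain ⟨j, rfl, -⟩ := c.mem_support_iff_exists_getVert.1 hx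
  have h₁ := dist_le (c.take j)
  have h₂ := dist_le (c.drop j)
  rw [dist_comm] at h₂
  simp only [take_length, drop_length] at h₁ h₂
  omega

theorem IsPath.eq_of_length_add_lt_egirth {u v : V} {p q : G.Walk u v} (hp : p.IsPath)
    (hq : q.IsPath) (hlt : (p.length + q.length : ℕ∞) < G.egirth) : p = q := by
  by_contra hne
  obtain ⟨_, _, p', q', hp', hq', hcyc⟩ := hp.exists_isCycle_of_ne hq hne
  refine (egirth_le_length hcyc).not_gt (lt_of_le_of_lt ?_ hlt)
  have := length_le_of_isSubwalk hp'
  have := length_le_of_isSubwalk hq'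
  simp only [length_append, length_reverse]
  exact_mod_cast (by omega)

theorem IsPath.length_eq_dist_of_two_mul_le_egirth {u v : V} {p : G.Walk u v} (hp : p.IsPath)
    (h : (2 * p.length : ℕ∞) ≤ G.egirth) : p.length = G.dist u v := by
  obtain ⟨q, hq⟩ := p.reachable.exists_walk_length_eq_dist
  refine le_antisymm ?_ (hq ▸ dist_le p)
  by_contra! hlt
  have hqp := (q.isPath_of_length_eq_dist hq).eq_of_length_add_lt_egirth hp
    (lt_of_lt_of_le (by norm_cast; omega) h)
  exact hlt.ne' (hqp ▸ hq)

theorem IsPath.snd_eq_of_getVert_eq {u v w : V} {p : G.Walk u v} {q : G.Walk u w}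
    (hp : p.IsPath) (hq : q.IsPath) {i : ℕ} (hi : 1 ≤ i) (hip : i ≤ p.length)
    (hiq : i ≤ q.length) (hg : (2 * i : ℕ∞) < G.egirth) (h : p.getVert i = q.getVert i) :
    p.snd = q.snd := by
  have hq' : ((q.take i).copy rfl h.symm).IsPath := by simpa using hq.take i
  have hpq := (hp.take i).eq_of_length_add_lt_egirth hq' (by
    simp only [take_length, length_copy, min_eq_left hip, min_eq_left hiq]
    exact_mod_cast (two_mul (i : ℕ∞)) ▸ hg)
  simpa [min_eq_right hi] using congrArg (·.getVert 1) hpq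

/-- Otherwise `c` up to position `t - 1` and `D` run backwards from `v` to `D.getVert (t + 1)`
would be distinct paths of total length `D.length - 2`, closing a cycle shorter than `D`. -/
theorem IsCycle.getVert_sub_one_ne_of_length_eq_egirth {v : V} {D c : G.Walk v v}
    (hD : D.IsCycle) (hDg : G.egirth = D.length) (hc : c.IsCycle) (hsnd : c.snd = D.snd)
    {t : ℕ} (ht : t < D.length) (htc : t ≤ c.length) :
    c.getVert (t - 1) ≠ D.getVert (t + 1) := by
  intro heq
  have := hD.three_le_length
  have := hc.three_le_length
  have hBend : D.reverse.getVert (D.length - t - 1) = D.getVert (t + 1) := by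
    rw [getVert_reverse]; congr 1; omega
  set A := (c.take (t - 1)).copy rfl heq
  set B := (D.reverse.take (D.length - t - 1)).copy rfl hBend
  have hA : A.IsPath := by simpa [A] using hc.isPath_take (by omega)
  have hB : B.IsPath := by simpa [B] using hD.reverse.isPath_take (by simp; omega)
  have hAB := hA.eq_of_length_add_lt_egirth hB (by
    rw [hDg]; simp only [A, B, length_copy, take_length, length_reverse]; norm_cast; omega)
  have hlen := congrArg length hAB
  have hsnd' := congrArg (·.snd) hAB
  simp only [A, B, length_copy, take_length, length_reverse, getVert_copy, take_getVert]
    at hlen hsnd'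
  rw [show min (t - 1) 1 = 1 by omega, show min (D.length - t - 1) 1 = 1 by omega,
    getVert_reverse] at hsnd'
  exact hD.snd_ne_penultimate (hsnd ▸ hsnd')

theorem apply_eq_of_even_length {α : Type*} {f : V → α}
    (hf : ∀ ⦃z u u'⦄, G.Adj z u → G.Adj z u' → f u = f u') :
    ∀ {u v : V} (p : G.Walk u v), Even p.length → f u = f v
  | _, _, .nil, _ => rfl
  | _, _, .cons _ .nil, hp => by simp at hp
  | _, _, .cons h (.cons h' p), hp =>
    (hf h.symm h').trans (apply_eq_of_even_length hf p (by simpa [Nat.even_add_one] using hp))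

end Walk

theorem Coloring.even_dist_iff (c : G.Coloring Bool) {u v : V} (h : G.Reachable u v) :
    Even (G.dist u v) ↔ (c u ↔ c v) := by
  obtain ⟨p, hp⟩ := h.exists_walk_length_eq_dist
  rw [← hp]
  exact c.even_length_iff_congr p

theorem Coloring.dist_ne_of_adj (c : G.Coloring Bool) (hconn : G.Connected) {x y : V}
    (hxy : G.Adj x y) (z : V) : G.dist z x ≠ G.dist z y := by
  intro h
  have hx := c.even_dist_iff (hconn z x)
  have hy := c.even_dist_iff (hconn z y)
  have := c.valid hxy
  rw [h] at hx
  revert hx hy this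
  cases c x <;> cases c y <;> cases c z <;> simp

theorem Coloring.dist_eq_sub_one_of_adj (c : G.Coloring Bool) (hconn : G.Connected) {m : ℕ}
    (hdiam : ∀ x y, G.dist x y ≤ m) {u w x : V} (hd : G.dist u w = m) (hx : G.Adj u x) :
    G.dist x w = m - 1 := by
  have hne := c.dist_ne_of_adj hconn hx w
  have := hdiam w x
  rw [dist_comm] at hd ⊢
  rcases hx.diff_dist_adj (u := w) with h | h | h <;> omega

theorem Coloring.dist_eq_add_one_of_adj_of_ne_snd (c : G.Coloring Bool) (hconn : G.Connected)
    {w τ y : V} (R : G.Walk w τ) (hR : R.length = G.dist w τ)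
    (hg : (2 * G.dist w τ : ℕ∞) < G.egirth) (hy : G.Adj w y) (hne : y ≠ R.snd) :
    G.dist y τ = G.dist w τ + 1 := by
  have hne' := c.dist_ne_of_adj hconn hy τ
  have h := hy.diff_dist_adj (u := τ)
  rw [dist_comm (u := τ), dist_comm (u := τ)] at h hne'
  rcases h with h | h | h
  · exact absurd h.symm hne'
  · exact h
  obtain ⟨Q, hQ⟩ := (hconn y τ).exists_walk_length_eq_dist
  have hW : (Walk.cons hy Q).length = G.dist w τ := by rw [Walk.length_cons, hQ, h]; omega
  have hend : (Walk.cons hy Q).getVert (G.dist w τ) = R.getVert (G.dist w τ) := by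
    rw [← hW, Walk.getVert_length, hW, ← hR, Walk.getVert_length]
  refine absurd ?_ hne
  simpa using (Walk.isPath_of_length_eq_dist _ hW).snd_eq_of_getVert_eq
    (R.isPath_of_length_eq_dist hR) (by omega) hW.ge hR.ge hg hend

theorem Coloring.exists_eq_of_adj (c : G.Coloring Bool) {u v : V} (h : G.Adj u v) (b : Bool) :
    ∃ x, c x = b := by
  by_cases hu : c u = b
  · exact ⟨u, hu⟩
  · have := c.valid h
    exact ⟨v, by revert hu this; cases c u <;> cases c v <;> cases b <;> simp⟩

theorem Coloring.apply_eq_of_eq {α : Type*} (c : G.Coloring Bool) (hconn : G.Connected)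
    {f : V → α} (hf : ∀ ⦃z u u'⦄, G.Adj z u → G.Adj z u' → f u = f u') {u v : V}
    (h : c u = c v) : f u = f v :=
  (hconn u v).elim fun p => p.apply_eq_of_even_length hf ((c.even_length_iff_congr p).2 (by rw [h]))

def EdgesOnCommonCycle (G : SimpleGraph V) (n : ℕ) : Prop :=
  ∀ e₁ ∈ G.edgeSet, ∀ e₂ ∈ G.edgeSet, ∃ (v : V) (c : G.Walk v v),
    c.IsCycle ∧ c.length = n ∧ e₁ ∈ c.edges ∧ e₂ ∈ c.edges

def CyclesRigid (G : SimpleGraph V) (n : ℕ) : Prop :=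
  ∀ (v₁ v₂ : V) (c₁ : G.Walk v₁ v₁) (c₂ : G.Walk v₂ v₂),
    c₁.IsCycle → c₂.IsCycle → c₁.length = n → c₂.length = n →
    (∃ e, e ∈ c₁.edges ∧ e ∈ c₂.edges) →
    ∃ f : {x : V // x ∈ c₁.support} ≃ {x : V // x ∈ c₂.support},
      (∀ a b : {x : V // x ∈ c₁.support},
        s(a.1, b.1) ∈ c₁.edges ↔ s((f a).1, (f b).1) ∈ c₂.edges) ∧
      (∀ a : {x : V // x ∈ c₁.support}, a.1 ∈ c₂.support → (f a).1 = a.1)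

variable {n : ℕ}

theorem EdgesOnCommonCycle.exists_isCycle {a b : V} {e : Sym2 V} (h : G.EdgesOnCommonCycle n)
    (hab : G.Adj a b) (he : e ∈ G.edgeSet) :
    ∃ c : G.Walk a a, c.IsCycle ∧ c.length = n ∧ c.snd = b ∧ e ∈ c.edges := by
  obtain ⟨_, c, hc, hcn, hab', he'⟩ := h _ (G.mem_edgeSet.2 hab) _ he
  obtain ⟨c', hc', hlen, hedges, hsnd⟩ := hc.exists_isCycle_snd_eq hab'
  exact ⟨c', hc', hlen.trans hcn, hsnd, hedges e he'⟩

/-- The rigidity isomorphism fixes `a` and the common second vertex, so, walking along `c₁`,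
it sends each position to the same position of `c₂`. -/
theorem CyclesRigid.getVert_eq_of_snd_eq (hG : G.CyclesRigid n) {a : V}
    {c₁ c₂ : G.Walk a a} (hc₁ : c₁.IsCycle) (hc₂ : c₂.IsCycle) (hl₁ : c₁.length = n)
    (hl₂ : c₂.length = n) (hsnd : c₁.snd = c₂.snd) {i : ℕ} (hi : i ≤ n)
    (hmem : c₁.getVert i ∈ c₂.support) :
    c₂.getVert i = c₁.getVert i := by
  have hab₂ := c₂.mk_start_snd_mem_edges hc₂.not_nil
  obtain ⟨f, hfe, hfix⟩ := hG a a c₁ c₂ hc₁ hc₂ hl₁ hl₂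
    ⟨_, c₁.mk_start_snd_mem_edges hc₁.not_nil, hsnd ▸ hab₂⟩
  let F : ℕ → V := fun j => (f ⟨c₁.getVert j, c₁.getVert_mem_support j⟩).1
  have hfixF : ∀ j, c₁.getVert j ∈ c₂.support → F j = c₁.getVert j :=
    fun _ => hfix ⟨_, _⟩
  have hF : ∀ j, j < n → F j = c₂.getVert j ∧ F (j + 1) = c₂.getVert (j + 1) := by
    intro j
    induction j with
    | zero =>
      intro _
      have h₁ : c₁.getVert 1 ∈ c₂.support := by
        change c₁.snd ∈ _; rw [hsnd]; exact c₂.snd_mem_support_of_mem_edges hab₂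
      exact ⟨by simpa using hfixF 0 (by simp), by rw [hfixF 1 h₁]; exact hsnd⟩
    | succ j ih =>
      intro hj
      obtain ⟨h₀, h₁⟩ := ih (by omega)
      refine ⟨h₁, ?_⟩
      have hE : s(c₂.getVert (j + 1), F (j + 2)) ∈ c₂.edges :=
        h₁ ▸ (hfe _ _).1 (c₁.mk_mem_edges_iff_exists.2 ⟨j + 1, by omega, rfl⟩)
      rcases hc₂.eq_getVert_sub_one_or_add_one_of_mem_edges (by omega) (by omega) hE
        with hback | hnext
      · have : F (j + 2) = F j := by rw [hback, h₀]; rfl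
        exact absurd (congrArg Subtype.val (f.injective (Subtype.ext this))).symm
          (hc₁.getVert_sub_one_ne_getVert_add_one (i := j + 1) (by omega))
      · exact hnext
  rcases hi.lt_or_eq with hi | hi
  · rw [← (hF i hi).1, hfixF i hmem]
  · rw [hi, ← hl₁, Walk.getVert_length, hl₁, ← hl₂, Walk.getVert_length]

/-- A shortest cycle `D` shorter than `n` is followed, edge by edge, by `n`-cycles leaving its
base point along `D.snd`; rigidity pins each new vertex of `D` to the same position of the
`n`-cycle, and after `D.length` steps the `n`-cycle would close up too early. -/
theorem CyclesRigid.le_egirth (h₁ : G.EdgesOnCommonCycle n) (h₂ : G.CyclesRigid n) :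
    (n : ℕ∞) ≤ G.egirth := by
  by_contra! hlt
  obtain ⟨v, D, hD, hDg⟩ := (G.exists_egirth_eq_length).2 fun hac => by
    simp [hac.egirth_eq_top] at hlt
  have hgn : D.length < n := by exact_mod_cast hDg ▸ hlt
  have hDe : ∀ t < D.length, s(D.getVert t, D.getVert (t + 1)) ∈ G.edgeSet := fun t ht =>
    D.edges_subset_edgeSet (D.mk_mem_edges_iff_exists.2 ⟨t, ht, rfl⟩)
  have hstart := D.adj_snd hD.not_nil
  have hpinned : ∀ t, 1 ≤ t → t ≤ D.length → ∃ c : G.Walk v v, c.IsCycle ∧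
      c.length = n ∧ c.snd = D.snd ∧ c.getVert t = D.getVert t := by
    intro t ht
    induction t, ht using Nat.le_induction with
    | base =>
      intro _
      obtain ⟨c, hc, hcn, hsnd, -⟩ := h₁.exists_isCycle hstart (G.mem_edgeSet.2 hstart)
      exact ⟨c, hc, hcn, hsnd, hsnd⟩
    | succ t ht ih =>
      intro htg
      obtain ⟨c, hc, hcn, hsnd, hct⟩ := ih (by omega)
      obtain ⟨c₂, hc₂, hc₂n, hsnd₂, he⟩ := h₁.exists_isCycle hstart (hDe t (by omega))
      have hpos : c₂.getVert t = D.getVert t := by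
        rw [← hct]
        exact h₂.getVert_eq_of_snd_eq hc hc₂ hcn hc₂n (hsnd.trans hsnd₂.symm) (by omega)
          (hct ▸ c₂.fst_mem_support_of_mem_edges he)
      rw [← hpos] at he
      rcases hc₂.eq_getVert_sub_one_or_add_one_of_mem_edges (by omega) (by omega) he with h | h
      · exact absurd h.symm
          (hD.getVert_sub_one_ne_of_length_eq_egirth hDg hc₂ hsnd₂ (by omega) (by omega))
      · exact ⟨c₂, hc₂, hc₂n, hsnd₂, h.symm⟩
  have h3 := hD.three_le_length
  obtain ⟨c, hc, hcn, -, hcg⟩ := hpinned D.length (by omega) le_rfl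
  rw [D.getVert_length] at hcg
  have := (hc.getVert_endpoint_iff (by omega)).1 hcg
  omega

theorem EdgesOnCommonCycle.dist_le {m : ℕ} (h : G.EdgesOnCommonCycle (2 * m))
    (hadj : ∀ v, ∃ w, G.Adj v w) (u v : V) : G.dist u v ≤ m := by
  obtain ⟨u', hu⟩ := hadj u
  obtain ⟨v', hv⟩ := hadj v
  obtain ⟨c, -, hcm, -, he⟩ := h.exists_isCycle hu (G.mem_edgeSet.2 hv)
  have := c.two_mul_dist_le_length (c.fst_mem_support_of_mem_edges he)
  omega

theorem EdgesOnCommonCycle.exists_dist_eq {m : ℕ} (h : G.EdgesOnCommonCycle (2 * m))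
    (hg : (2 * m : ℕ∞) ≤ G.egirth) {u u' : V} (hu : G.Adj u u') : ∃ w, G.dist u w = m := by
  obtain ⟨c, hc, hcm, -⟩ := h.exists_isCycle hu (G.mem_edgeSet.2 hu)
  have := hc.three_le_length
  have hlen : (c.take m).length = m := by simp; omega
  refine ⟨c.getVert m, ?_⟩
  rw [← (hc.isPath_take (by omega)).length_eq_dist_of_two_mul_le_egirth
    (by rw [hlen]; exact_mod_cast hg), hlen]

/-- Sending a neighbour `x` of `u` to the last inner vertex of a geodesic `u, x, …, w` is
injective, since two such geodesics agreeing there are too short to differ. -/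
theorem Coloring.degree_le_of_dist_eq [G.LocallyFinite] (c : G.Coloring Bool)
    (hconn : G.Connected) {m : ℕ} (hm : 2 ≤ m) (hdiam : ∀ x y, G.dist x y ≤ m)
    (hg : (2 * m : ℕ∞) ≤ G.egirth) {u w : V} (hd : G.dist u w = m) :
    G.degree u ≤ G.degree w := by
  have hW : ∀ x ∈ G.neighborFinset u,
      ∃ W : G.Walk u w, W.IsPath ∧ W.length = m ∧ W.snd = x := by
    intro x hx
    rw [mem_neighborFinset] at hx
    obtain ⟨P, hP⟩ := (hconn x w).exists_walk_length_eq_dist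
    have hlen : (Walk.cons hx P).length = m := by
      rw [Walk.length_cons, hP, c.dist_eq_sub_one_of_adj hconn hdiam hd hx]; omega
    exact ⟨_, Walk.isPath_of_length_eq_dist _ (hlen.trans hd.symm), hlen, Walk.snd_cons ..⟩
  have : Nonempty (G.Walk u w) := hconn u w
  choose! W hWpath hWlen hWsnd using hW
  rw [← card_neighborFinset_eq_degree, ← card_neighborFinset_eq_degree]
  refine Finset.card_le_card_of_injOn (fun x => (W x).getVert (m - 1)) (fun x hx => ?_)
    (fun x hx x' hx' h => ?_)
  · have hadj := (W x).adj_getVert_succ (i := m - 1) (by rw [hWlen x hx]; omega)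
    have hend : (W x).getVert m = w := hWlen x hx ▸ (W x).getVert_length
    rw [Nat.sub_add_cancel (by omega : 1 ≤ m), hend] at hadj
    exact (G.mem_neighborFinset _ _).2 hadj.symm
  · rw [← hWsnd x hx, ← hWsnd x' hx']
    exact (hWpath x hx).snd_eq_of_getVert_eq (hWpath x' hx') (by omega)
      (by rw [hWlen x hx]; omega) (by rw [hWlen x' hx']; omega)
      (lt_of_lt_of_le (by norm_cast; omega) hg) h

theorem Coloring.degree_eq_of_dist_eq [G.LocallyFinite] (c : G.Coloring Bool)
    (hconn : G.Connected) {m : ℕ} (hm : 2 ≤ m) (hdiam : ∀ x y, G.dist x y ≤ m)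
    (hg : (2 * m : ℕ∞) ≤ G.egirth) {u w : V} (hd : G.dist u w = m) :
    G.degree u = G.degree w :=
  le_antisymm (c.degree_le_of_dist_eq hconn hm hdiam hg hd)
    (c.degree_le_of_dist_eq hconn hm hdiam hg (dist_comm.trans hd))

/-- Take `w` opposite to `z`; a neighbour `y` of `w` avoiding the geodesics from `w` to `u` and
to `u'` (it exists by thickness) is opposite to both `u` and `u'`. -/
theorem Coloring.degree_eq_of_adj_of_adj [G.LocallyFinite] (c : G.Coloring Bool)
    (hconn : G.Connected) {m : ℕ} (hm : 2 ≤ m) (hdiam : ∀ x y, G.dist x y ≤ m)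
    (hg : (2 * m : ℕ∞) ≤ G.egirth) (hopp : ∀ z, ∃ w, G.dist z w = m)
    (hthick : ∀ v, 3 ≤ G.degree v) {z u u' : V} (hu : G.Adj z u) (hu' : G.Adj z u') :
    G.degree u = G.degree u' := by
  classical
  obtain ⟨w, hw⟩ := hopp z
  obtain ⟨R, hR⟩ := (hconn w u).exists_walk_length_eq_dist
  obtain ⟨R', hR'⟩ := (hconn w u').exists_walk_length_eq_dist
  obtain ⟨y, hy, hyR, hyR'⟩ : ∃ y, G.Adj w y ∧ y ≠ R.snd ∧ y ≠ R'.snd := by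
    have := Finset.pred_card_le_card_erase (s := G.neighborFinset w) (a := R.snd)
    have := hthick w
    rw [card_neighborFinset_eq_degree] at *
    obtain ⟨y, hy, hyR'⟩ := Finset.exists_mem_ne (s := (G.neighborFinset w).erase R.snd)
      (by omega) R'.snd
    obtain ⟨hyR, hy⟩ := Finset.mem_erase.1 hy
    exact ⟨y, (G.mem_neighborFinset _ _).1 hy, hyR, hyR'⟩
  have hopposite : ∀ {v : V} (R : G.Walk w v), R.length = G.dist w v → G.Adj z v →
      y ≠ R.snd → G.dist v y = m := by
    intro v R hR hv hyR
    have hdv : G.dist w v = m - 1 :=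
      dist_comm.trans (c.dist_eq_sub_one_of_adj hconn hdiam hw hv)
    rw [dist_comm, c.dist_eq_add_one_of_adj_of_ne_snd hconn R hR
      (lt_of_lt_of_le (by rw [hdv]; norm_cast; omega) hg) hy hyR, hdv]
    omega
  rw [c.degree_eq_of_dist_eq hconn hm hdiam hg (hopposite R hR hu hyR),
    c.degree_eq_of_dist_eq hconn hm hdiam hg (hopposite R' hR' hu' hyR')]

end SimpleGraph

open SimpleGraph

theorem generalized_polygon_regularity_general {V : Type} [Fintype V]
    (G : SimpleGraph V) [DecidableRel G.Adj] (hconn : G.Connected)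
    (m : ℕ) (hm : 2 ≤ m)
    (col : V → Bool) (hcol : ∀ u v : V, G.Adj u v → col u ≠ col v)
    (h1 : ∀ e₁ ∈ G.edgeSet, ∀ e₂ ∈ G.edgeSet, ∃ (v : V) (c : G.Walk v v),
      c.IsCycle ∧ c.length = 2 * m ∧ e₁ ∈ c.edges ∧ e₂ ∈ c.edges)
    (h2 : ∀ (v₁ v₂ : V) (c₁ : G.Walk v₁ v₁) (c₂ : G.Walk v₂ v₂),
      c₁.IsCycle → c₂.IsCycle → c₁.length = 2 * m → c₂.length = 2 * m →
      (∃ e, e ∈ c₁.edges ∧ e ∈ c₂.edges) →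
      ∃ f : {x : V // x ∈ c₁.support} ≃ {x : V // x ∈ c₂.support},
        (∀ a b : {x : V // x ∈ c₁.support},
          s(a.1, b.1) ∈ c₁.edges ↔ s((f a).1, (f b).1) ∈ c₂.edges) ∧
        (∀ a : {x : V // x ∈ c₁.support}, a.1 ∈ c₂.support → (f a).1 = a.1))
    (hthick : ∀ v : V, 3 ≤ G.degree v) :
    ∃ r b : ℕ, 2 ≤ r ∧ 2 ≤ b ∧
      (∀ v : V, col v = true → G.degree v = r + 1) ∧
      (∀ v : V, col v = false → G.degree v = b + 1) ∧
      (Odd m → r = b) := by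
  let c : G.Coloring Bool := Coloring.mk col fun h => hcol _ _ h
  have hadj : ∀ v, ∃ w, G.Adj v w := fun v =>
    (G.degree_pos_iff_exists_adj v).1 (by have := hthick v; omega)
  have hg : (2 * m : ℕ∞) ≤ G.egirth := by exact_mod_cast CyclesRigid.le_egirth h1 h2
  have hdiam := EdgesOnCommonCycle.dist_le h1 hadj
  have hopp : ∀ z, ∃ w, G.dist z w = m := fun z =>
    (hadj z).elim fun _ h => EdgesOnCommonCycle.exists_dist_eq h1 hg h
  have hsame : ∀ {u v}, c u = c v → G.degree u = G.degree v :=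
    c.apply_eq_of_eq hconn fun _ _ _ => c.degree_eq_of_adj_of_adj hconn hm hdiam hg hopp hthick
  obtain ⟨v₀⟩ := hconn.nonempty
  obtain ⟨v₁, h₀₁⟩ := hadj v₀
  obtain ⟨ur, hur⟩ := c.exists_eq_of_adj h₀₁ true
  obtain ⟨ub, hub⟩ := c.exists_eq_of_adj h₀₁ false
  have h3r := hthick ur
  have h3b := hthick ub
  refine ⟨G.degree ur - 1, G.degree ub - 1, by omega, by omega, fun v hv => ?_, fun v hv => ?_,
    fun hodd => ?_⟩
  · rw [hsame (hv.trans hur.symm)]; omega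
  · rw [hsame (hv.trans hub.symm)]; omega
  obtain ⟨w, hw⟩ := hopp ur
  have hwb : c w = false := by
    simpa [hur] using (c.even_dist_iff (hconn ur w)).not.1 (hw ▸ Nat.not_even_iff_odd.2 hodd)
  rw [c.degree_eq_of_dist_eq hconn hm hdiam hg hw, hsame (hwb.trans hub.symm)]

/-- let `L` be a finite generalized thick `m`-gon (`m ≥ 2`): a connected
bipartite graph with proper red/blue coloring `col`, in which any two edges lie on a common
circuit of combinatorial length `2m`, any two such circuits sharing an edge are isomorphic
via an isomorphism fixing their intersection pointwise, and every vertex has valence ≥ 3.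
Then there exist integers `r, b ≥ 2` such that every red vertex lies in exactly `r + 1` edges
and every blue vertex lies in exactly `b + 1` edges; moreover if `m` is odd then `r = b`. -/
theorem generalized_polygon_regularity {V : Type} [Fintype V] [DecidableEq V]
    (G : SimpleGraph V) [DecidableRel G.Adj] (hconn : G.Connected)
    (m : ℕ) (hm : 2 ≤ m)
    (col : V → Bool) (hcol : ∀ u v : V, G.Adj u v → col u ≠ col v)
    (h1 : ∀ e₁ ∈ G.edgeSet, ∀ e₂ ∈ G.edgeSet, ∃ (v : V) (c : G.Walk v v),
      c.IsCycle ∧ c.length = 2 * m ∧ e₁ ∈ c.edges ∧ e₂ ∈ c.edges)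
    (h2 : ∀ (v₁ v₂ : V) (c₁ : G.Walk v₁ v₁) (c₂ : G.Walk v₂ v₂),
      c₁.IsCycle → c₂.IsCycle → c₁.length = 2 * m → c₂.length = 2 * m →
      (∃ e, e ∈ c₁.edges ∧ e ∈ c₂.edges) →
      ∃ f : {x : V // x ∈ c₁.support} ≃ {x : V // x ∈ c₂.support},
        (∀ a b : {x : V // x ∈ c₁.support},
          s(a.1, b.1) ∈ c₁.edges ↔ s((f a).1, (f b).1) ∈ c₂.edges) ∧
        (∀ a : {x : V // x ∈ c₁.support}, a.1 ∈ c₂.support → (f a).1 = a.1))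
    (hthick : ∀ v : V, 3 ≤ G.degree v) :
    ∃ r b : ℕ, 2 ≤ r ∧ 2 ≤ b ∧
      (∀ v : V, col v = true → G.degree v = r + 1) ∧
      (∀ v : V, col v = false → G.degree v = b + 1) ∧
      (Odd m → r = b) :=
  generalized_polygon_regularity_general G hconn m hm col hcol h1 h2 hthick
end

section
/- Let Γ be a finite simplicial graph, K ⊆ Γ a clique with vertices v₁,…,v_k, φ : W_Γ → W_K the retraction, and Γ' the finite simplicial graph with vertex set R' = { v(ε) } in bijection with the set R of reduced elements g(ε) v g(ε) (v ∈ V(Γ)\V(K), ε ∈ (ℤ/2)^k), where u(ε₁) and v(ε₂) are joined by an edge iff (u,v) ∈ E(Γ) and there is ε with g(ε₁)u g(ε₁) = g(ε)u g(ε) and g(ε₂)v g(ε₂) = g(ε)v g(ε) in W_Γ. Then the map v(ε) ↦ g(ε) v g(ε) extends to a group isomorphism W_{Γ'} → ker φ; consequently W_Γ and W_{Γ'} are commensurable. -/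
/-- The element of `W_Γ` represented by a word in the generators. -/
def wordProd {V : Type} (G : SimpleGraph V) (w : List V) : RACG G :=
  (w.map fun v => (PresentedGroup.of v : RACG G)).prod

/-- The word `v₁^{ε₁} ⋯ v_k^{ε_k}` in the clique generators `v₁, …, v_k` determined by
`ε ∈ (ℤ/2)^k`. -/
def epsWord {V : Type} {k : ℕ} (vv : Fin k → V) (ε : Fin k → ZMod 2) : List V :=
  (List.finRange k).filterMap fun i => if ε i = 1 then some (vv i) else none

/-- The element `g(ε) = v₁^{ε₁} ⋯ v_k^{ε_k}` of `W_Γ`. -/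
def gw {V : Type} (G : SimpleGraph V) {k : ℕ} (vv : Fin k → V)
    (ε : Fin k → ZMod 2) : RACG G :=
  wordProd G (epsWord vv ε)

/-- The pair `(ε, v)` is reduced if the word `g(ε) v g(ε)` cannot be shortened: no strictly
shorter word in the generators represents the same element of `W_Γ`. -/
def IsReducedPair {V : Type} (G : SimpleGraph V) {k : ℕ} (vv : Fin k → V)
    (ε : Fin k → ZMod 2) (v : V) : Prop :=
  ∀ w : List V, wordProd G w = wordProd G (epsWord vv ε ++ v :: epsWord vv ε) →
    (epsWord vv ε ++ v :: epsWord vv ε).length ≤ w.length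

/-- The set `R` of elements `g(ε) v g(ε)` (with `v ∈ V(Γ)\V(K)`) whose defining words are
reduced in `W_Γ`; it is the vertex set `R'` of `Γ'` (via the bijection `v(ε) ↦ g(ε) v g(ε)`). -/
def RSet {V : Type} (G : SimpleGraph V) {k : ℕ} (vv : Fin k → V) : Set (RACG G) :=
  {x | ∃ (ε : Fin k → ZMod 2) (v : V), v ∉ Set.range vv ∧ IsReducedPair G vv ε v ∧
    x = gw G vv ε * PresentedGroup.of v * gw G vv ε}

/-- The graph `Γ'` on the vertex set `R'` ≅ `R`: two vertices `u(ε₁)` and `v(ε₂)` are joined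
by an edge iff `(u,v) ∈ E(Γ)` and there is `ε` with `g(ε₁)u g(ε₁) = g(ε)u g(ε)` and
`g(ε₂)v g(ε₂) = g(ε)v g(ε)` in `W_Γ` (stated here directly for the corresponding group
elements). -/
def gammaPrime {V : Type} (G : SimpleGraph V) {k : ℕ} (vv : Fin k → V) :
    SimpleGraph ↥(RSet G vv) where
  Adj x y := x ≠ y ∧ ∃ (ε : Fin k → ZMod 2) (u v : V), u ∉ Set.range vv ∧
    v ∉ Set.range vv ∧ G.Adj u v ∧
    (x : RACG G) = gw G vv ε * PresentedGroup.of u * gw G vv ε ∧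
    (y : RACG G) = gw G vv ε * PresentedGroup.of v * gw G vv ε
  symm := by
    constructor
    rintro x y ⟨hne, ε, u, v, hu, hv, hadj, hx, hy⟩
    exact ⟨hne.symm, ε, v, u, hv, hu, hadj.symm, hy, hx⟩
  loopless := by constructor; rintro x ⟨hne, -⟩; exact hne rfl


/-!
Let `ψ : W_{Γ'} → W_Γ` extend `v(ε) ↦ g(ε) v g(ε)`, and let `(ℤ/2)^k` act on `W_{Γ'}` through
the graph automorphisms `x ↦ g(ε) x g(ε)` of `Γ'`. Sending `vᵢ` to the `i`-th basis vector and
every other vertex `v` to the vertex `v(0)` defines `λ : W_Γ → W_{Γ'} ⋊ (ℤ/2)^k`. It is a right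
inverse of `μ : (x, ε) ↦ ψ(x) g(ε)`, and `λ ∘ ψ` is the inclusion of `W_{Γ'}`. Hence `ψ` is
injective, and since `λ` maps `ker φ` into `W_{Γ'}`, `ker φ = μ (λ (ker φ)) ⊆ im ψ ⊆ ker φ`.

That every `g(ε) v g(ε)` is a vertex of `Γ'` uses the clique: clique vertices adjacent to `v`
can be dropped from `ε`, and for the remaining ones the word `g(ε) v g(ε)` is reduced, because
in any word for the same element each `vᵢ` of `g(ε)` occurs an even number of times (by parity)
and at least once (by a map to `S₃`). Finally `ker φ` has finite index since `W_K` is a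
quotient of `(ℤ/2)^k`.
-/

open Function PresentedGroup

theorem ZMod.eq_zero_or_eq_one_of_two (a : ZMod 2) : a = 0 ∨ a = 1 := by
  decide +revert

theorem zmod_two_pi_add_self {ι : Type*} (ε : ι → ZMod 2) : ε + ε = 0 :=
  funext fun i => CharTwo.add_self_eq_zero (ε i)

theorem pow_val_add_of_mul_self_eq_one {M : Type*} [Monoid M] {x : M} (hx : x * x = 1)
    (a b : ZMod 2) : x ^ (a + b).val = x ^ a.val * x ^ b.val := by
  rcases a.eq_zero_or_eq_one_of_two with rfl | rfl <;>
    rcases b.eq_zero_or_eq_one_of_two with rfl | rfl <;>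
    simp [hx, ZMod.val_one, show (1 + 1 : ZMod 2) = 0 from rfl]

theorem List.prod_map_pow_val_add {ι M : Type*} [Monoid M] {x : ι → M}
    (hcomm : ∀ i j, Commute (x i) (x j)) (hsq : ∀ i, x i * x i = 1) (a b : ι → ZMod 2)
    (l : List ι) :
    (l.map fun i => x i ^ (a i + b i).val).prod =
      (l.map fun i => x i ^ (a i).val).prod * (l.map fun i => x i ^ (b i).val).prod := by
  induction l with
  | nil => simp
  | cons i l ih =>
    have hcomm_prod : Commute (x i ^ (b i).val) (l.map fun j => x j ^ (a j).val).prod :=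
      Commute.list_prod_right _ _ fun _ hy => by
        obtain ⟨j, -, rfl⟩ := List.mem_map.1 hy
        exact ((hcomm i j).pow_left _).pow_right _
    simp only [List.map_cons, List.prod_cons, ih, pow_val_add_of_mul_self_eq_one (hsq i)]
    exact hcomm_prod.mul_mul_mul_comm _ _

theorem hom_ext_ofAdd_single {ι M : Type*} [Finite ι] [DecidableEq ι] [Monoid M]
    {f g : Multiplicative (ι → ZMod 2) →* M}
    (h : ∀ i, f (.ofAdd (Pi.single i 1)) = g (.ofAdd (Pi.single i 1))) : f = g :=
  MonoidHom.ext fun q => Pi.single_induction (fun ε => f (.ofAdd ε) = g (.ofAdd ε)) q.toAdd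
    (by simp) (fun ε ε' hε hε' => by simp only [ofAdd_add, map_mul, hε, hε'])
    fun i m => by rcases m.eq_zero_or_eq_one_of_two with rfl | rfl <;> simp [h]

namespace RACG

variable {V W : Type} {G : SimpleGraph V} {H : SimpleGraph W}

theorem of_mul_self (v : V) : (of v * of v : RACG G) = 1 :=
  (QuotientGroup.eq_one_iff _).2 (Subgroup.subset_normalClosure (Or.inl ⟨v, rfl⟩))

theorem commute_of_adj {u v : V} (h : G.Adj u v) : Commute (of u : RACG G) (of v) := by
  have hsq : (of u * of v : RACG G) ^ 2 = 1 :=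
    (QuotientGroup.eq_one_iff _).2 (Subgroup.subset_normalClosure (Or.inr ⟨u, v, h, rfl⟩))
  have hinv (w : V) : (of w : RACG G)⁻¹ = of w := inv_eq_of_mul_eq_one_right (of_mul_self w)
  rw [pow_two] at hsq
  calc of u * of v = (of u * of v)⁻¹ := eq_inv_of_mul_eq_one_left hsq
    _ = of v * of u := by rw [mul_inv_rev, hinv, hinv]

def lift {M : Type*} [Group M] (f : V → M) (hsq : ∀ v, f v * f v = 1)
    (hcomm : ∀ u v, G.Adj u v → Commute (f u) (f v)) : RACG G →* M :=
  PresentedGroup.toGroup (f := f) <| by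
    rintro r (⟨v, rfl⟩ | ⟨u, v, huv, rfl⟩)
    · simpa using hsq v
    · rw [map_pow, map_mul, FreeGroup.lift_apply_of, FreeGroup.lift_apply_of,
        (hcomm u v huv).mul_pow, pow_two, hsq, pow_two, hsq, one_mul]

@[simp]
theorem lift_of {M : Type*} [Group M] (f : V → M) (hsq : ∀ v, f v * f v = 1)
    (hcomm : ∀ u v, G.Adj u v → Commute (f u) (f v)) (v : V) :
    lift f hsq hcomm (of v) = f v :=
  PresentedGroup.toGroup.of _

def map (f : G →g H) : RACG G →* RACG H :=
  lift (fun v => of (f v)) (fun v => of_mul_self (f v)) fun _ _ h => commute_of_adj (f.map_adj h)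

@[simp]
theorem map_of (f : G →g H) (v : V) : map f (of v) = of (f v) :=
  lift_of _ _ _ v

def congr (e : G ≃g H) : RACG G ≃* RACG H :=
  MonoidHom.toMulEquiv (map e.toHom) (map e.symm.toHom)
    (PresentedGroup.ext fun v => by simp) (PresentedGroup.ext fun v => by simp)

def autHom : (G ≃g G) →* MulAut (RACG G) where
  toFun := congr
  map_one' := MulEquiv.toMonoidHom_injective (PresentedGroup.ext fun v => by simp [congr])
  map_mul' e f := MulEquiv.toMonoidHom_injective (PresentedGroup.ext fun v => by simp [congr])

@[simp]
theorem autHom_of (e : G ≃g G) (v : V) : autHom e (of v) = of (e v) :=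
  map_of _ v

end RACG

section Words

variable {V : Type} {G : SimpleGraph V}

@[simp]
theorem wordProd_nil : wordProd G [] = 1 := rfl

@[simp]
theorem wordProd_cons (v : V) (w : List V) : wordProd G (v :: w) = of v * wordProd G w := by
  simp [wordProd]

@[simp]
theorem wordProd_append (w₁ w₂ : List V) :
    wordProd G (w₁ ++ w₂) = wordProd G w₁ * wordProd G w₂ := by
  simp [wordProd]

theorem map_wordProd_eq_pow_count [DecidableEq V] {M : Type*} [Group M] (F : RACG G →* M)
    (s : V) {w : List V} (hw : ∀ u ∈ w, u ≠ s → F (of u) = 1) :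
    F (wordProd G w) = F (of s) ^ w.count s := by
  induction w with
  | nil => simp
  | cons u w ih =>
    rw [wordProd_cons, map_mul, ih fun x hx => hw x (List.mem_cons_of_mem u hx)]
    by_cases hus : u = s
    · rw [hus, List.count_cons_self, pow_succ']
    · rw [hw u List.mem_cons_self hus, one_mul, List.count_cons_of_ne hus]

theorem count_mod_two_eq_of_wordProd_eq [DecidableEq V] {w w' : List V}
    (h : wordProd G w = wordProd G w') (s : V) : w.count s % 2 = w'.count s % 2 := by
  let parity : RACG G →* Multiplicative (ZMod 2) :=
    RACG.lift (fun u => if u = s then Multiplicative.ofAdd 1 else 1)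
      (fun u => by split_ifs <;> decide) fun _ _ _ => Commute.all _ _
  have hcount (w : List V) :
      parity (wordProd G w) = Multiplicative.ofAdd (w.count s : ZMod 2) := by
    rw [map_wordProd_eq_pow_count parity s fun u _ hu => by simp [parity, hu]]
    simp [parity, ← ofAdd_nsmul]
  have := congrArg parity h
  rw [hcount, hcount, EmbeddingLike.apply_eq_iff_eq] at this
  exact (ZMod.natCast_eq_natCast_iff' _ _ 2).1 this

theorem RACG.of_injective : Injective (of : V → RACG G) := by
  classical
  intro u u' h
  have := count_mod_two_eq_of_wordProd_eq (G := G) (w := [u]) (w' := [u']) (by simpa using h) u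
  by_contra hne
  simp [Ne.symm hne] at this

theorem commute_map_wordProd {M : Type*} [Group M] (F : RACG G →* M) {w : List V} {b : M}
    (h : ∀ u ∈ w, Commute (F (of u)) b) : Commute (F (wordProd G w)) b := by
  rw [wordProd, map_list_prod, List.map_map]
  exact Commute.list_prod_left _ _ fun y hy => by
    obtain ⟨u, hu, rfl⟩ := List.mem_map.1 hy
    exact h u hu

end Words

section CliqueWords

variable {V : Type} {G : SimpleGraph V} {k : ℕ} {vv : Fin k → V}

theorem epsWord_eq_map_filter (ε : Fin k → ZMod 2) :
    epsWord vv ε = ((List.finRange k).filter (ε · = 1)).map vv := by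
  rw [epsWord]
  induction List.finRange k with
  | nil => rfl
  | cons i l ih => by_cases h : ε i = 1 <;> simp [h, ih]

theorem mem_epsWord {ε : Fin k → ZMod 2} {u : V} :
    u ∈ epsWord vv ε ↔ ∃ i, ε i = 1 ∧ vv i = u := by
  simp [epsWord_eq_map_filter]

theorem nodup_epsWord (hinj : Injective vv) (ε : Fin k → ZMod 2) :
    (epsWord vv ε).Nodup := by
  rw [epsWord_eq_map_filter]
  exact ((List.nodup_finRange k).filter _).map hinj

theorem gw_eq_prod (ε : Fin k → ZMod 2) :
    gw G vv ε = ((List.finRange k).map fun i => (of (vv i) : RACG G) ^ (ε i).val).prod := by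
  rw [gw, epsWord]
  induction List.finRange k with
  | nil => rfl
  | cons i l ih =>
    rcases (ε i).eq_zero_or_eq_one_of_two with h | h <;> simp [h, ih, ZMod.val_one]

theorem commute_of_pairwise_adj (hclique : Pairwise (G.Adj on vv)) (i j : Fin k) :
    Commute (of (vv i) : RACG G) (of (vv j)) := by
  rcases eq_or_ne i j with rfl | hij
  · exact Commute.refl _
  · exact RACG.commute_of_adj (hclique hij)

theorem gw_add (hclique : Pairwise (G.Adj on vv)) (ε ε' : Fin k → ZMod 2) :
    gw G vv (ε + ε') = gw G vv ε * gw G vv ε' := by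
  simp only [gw_eq_prod, Pi.add_apply]
  exact List.prod_map_pow_val_add (commute_of_pairwise_adj hclique)
    (fun i => RACG.of_mul_self _) ε ε' _

@[simp]
theorem gw_zero : gw G vv 0 = 1 := by
  simp [gw_eq_prod]

theorem gw_mul_self (hclique : Pairwise (G.Adj on vv)) (ε : Fin k → ZMod 2) :
    gw G vv ε * gw G vv ε = 1 := by
  rw [← gw_add hclique, zmod_two_pi_add_self, gw_zero]

theorem gw_single (i : Fin k) : gw G vv (Pi.single i 1) = of (vv i) := by
  rw [gw, epsWord_eq_map_filter]
  simp [Pi.single_apply, List.filter_eq]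

def gwHom (hclique : Pairwise (G.Adj on vv)) : Multiplicative (Fin k → ZMod 2) →* RACG G where
  toFun q := gw G vv q.toAdd
  map_one' := gw_zero
  map_mul' q q' := gw_add hclique q.toAdd q'.toAdd

theorem map_gw {M : Type*} [Group M] (hclique : Pairwise (G.Adj on vv)) {F : RACG G →* M}
    {f : Multiplicative (Fin k → ZMod 2) →* M}
    (h : ∀ i, F (of (vv i)) = f (.ofAdd (Pi.single i 1))) (ε : Fin k → ZMod 2) :
    F (gw G vv ε) = f (.ofAdd ε) :=
  DFunLike.congr_fun (hom_ext_ofAdd_single (f := F.comp (gwHom hclique)) fun i => by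
    simpa [gwHom, gw_single] using h i) (.ofAdd ε)

theorem pairwise_adj_induce_range (hclique : Pairwise (G.Adj on vv)) :
    Pairwise (G.induce (Set.range vv)).Adj := by
  rintro ⟨_, i, rfl⟩ ⟨_, j, rfl⟩ hne
  exact hclique fun hij => hne (by rw [hij])

end CliqueWords

theorem RACG.finite_of_pairwise_adj {V : Type} [Finite V] {G : SimpleGraph V}
    (h : Pairwise G.Adj) : Finite (RACG G) := by
  obtain ⟨n, ⟨e⟩⟩ := Finite.exists_equiv_fin V
  have hclique : Pairwise (G.Adj on e.symm) := fun i j hij => h (e.symm.injective.ne hij)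
  refine Finite.of_surjective (gwHom hclique) fun x => ?_
  refine PresentedGroup.generated_by _ (gwHom hclique).range (fun v => ?_) x
  exact ⟨.ofAdd (Pi.single (e v) 1), by simp [gwHom, gw_single]⟩

section Reduced

variable {V : Type} {G : SimpleGraph V} {k : ℕ} {vv : Fin k → V}

/-- The map `W_Γ → S₃` sending `vᵢ` and `v` to non-commuting transpositions and every other
generator to `1` detects `vᵢ` in any word for `g(ε) v g(ε)`. -/
theorem mem_of_wordProd_eq_conj [DecidableEq V] (hinj : Injective vv) {ε : Fin k → ZMod 2}
    {v : V} (hv : v ∉ Set.range vv) {i : Fin k} (hi : ε i = 1) (hna : ¬ G.Adj (vv i) v)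
    {w : List V} (hw : wordProd G w = gw G vv ε * of v * gw G vv ε) : vv i ∈ w := by
  have hvi : v ≠ vv i := fun h => hv ⟨i, h.symm⟩
  let σ : Equiv.Perm (Fin 3) := Equiv.swap 0 1
  let τ : Equiv.Perm (Fin 3) := Equiv.swap 1 2
  let χ : RACG G →* Equiv.Perm (Fin 3) :=
    RACG.lift (fun u => if u = vv i then σ else if u = v then τ else 1)
      (fun u => by split_ifs <;> simp [σ, τ]) fun u u' huu' => by
        split_ifs <;> subst_vars <;>
          first
          | exact Commute.refl _
          | exact Commute.one_left _
          | exact Commute.one_right _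
          | exact absurd huu' hna
          | exact absurd huu'.symm hna
  have hg : χ (gw G vv ε) = σ := by
    rw [gw, map_wordProd_eq_pow_count χ (vv i), List.count_eq_one_of_mem (nodup_epsWord hinj ε)
      (mem_epsWord.2 ⟨i, hi, rfl⟩)]
    · simp [χ]
    · intro u hu hui
      obtain ⟨j, -, rfl⟩ := mem_epsWord.1 hu
      have hjv : vv j ≠ v := fun h => hv ⟨j, h⟩
      simp [χ, hui, hjv]
  by_contra hw_i
  have hcomm : Commute (χ (wordProd G w)) τ := commute_map_wordProd χ fun u hu => by
    have hui : u ≠ vv i := fun h => hw_i (h ▸ hu)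
    simp only [χ, RACG.lift_of, if_neg hui]
    split_ifs
    · exact Commute.refl _
    · exact Commute.one_left _
  rw [hw, map_mul, map_mul, hg] at hcomm
  simp only [χ, RACG.lift_of, if_neg hvi, if_true] at hcomm
  exact absurd hcomm.eq (by decide)

theorem isReducedPair_of_forall_not_adj (hinj : Injective vv) {ε : Fin k → ZMod 2} {v : V}
    (hv : v ∉ Set.range vv) (hna : ∀ i, ε i = 1 → ¬ G.Adj (vv i) v) :
    IsReducedPair G vv ε v := by
  classical
  intro w hw
  refine (List.subperm_ext_iff.2 fun x hx => ?_).length_le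
  have hparity := count_mod_two_eq_of_wordProd_eq hw x
  have hle : (epsWord vv ε).count x ≤ 1 :=
    List.nodup_iff_count_le_one.1 (nodup_epsWord hinj ε) x
  rw [List.count_append, List.count_cons] at hparity ⊢
  by_cases hxv : x = v
  · subst hxv
    have : (epsWord vv ε).count x = 0 := List.count_eq_zero.2 fun h => by
      obtain ⟨i, -, rfl⟩ := mem_epsWord.1 h
      exact hv ⟨i, rfl⟩
    simp only [this, beq_self_eq_true, if_true] at hparity ⊢
    omega
  · obtain ⟨i, hi, rfl⟩ : ∃ i, ε i = 1 ∧ vv i = x := by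
      simpa [hxv, mem_epsWord] using hx
    have hpos : 0 < w.count (vv i) := List.count_pos_iff.2 <|
      mem_of_wordProd_eq_conj hinj hv hi (hna i hi) (by simp [hw, gw, mul_assoc])
    simp only [beq_iff_eq, Ne.symm hxv, if_false] at hparity ⊢
    omega

end Reduced

section ConjugatesInR

variable {V : Type} {G : SimpleGraph V} {k : ℕ} {vv : Fin k → V}

theorem commute_gw_of {ε : Fin k → ZMod 2} {u : V} (h : ∀ i, ε i = 1 → G.Adj (vv i) u) :
    Commute (gw G vv ε) (of u) :=
  commute_map_wordProd (MonoidHom.id _) fun x hx => by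
    obtain ⟨i, hi, rfl⟩ := mem_epsWord.1 hx
    exact RACG.commute_of_adj (h i hi)

theorem gw_mul_mul_gw_eq_conj (hclique : Pairwise (G.Adj on vv)) (ε : Fin k → ZMod 2)
    (z : RACG G) : gw G vv ε * z * gw G vv ε = MulAut.conj (gw G vv ε) z := by
  rw [MulAut.conj_apply, inv_eq_of_mul_eq_one_right (gw_mul_self hclique ε)]

theorem gw_mul_gw_conj (hclique : Pairwise (G.Adj on vv)) (ε₀ ε : Fin k → ZMod 2)
    (z : RACG G) :
    gw G vv ε₀ * (gw G vv ε * z * gw G vv ε) * gw G vv ε₀ =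
      gw G vv (ε₀ + ε) * z * gw G vv (ε₀ + ε) := by
  have hcomm : gw G vv ε * gw G vv ε₀ = gw G vv ε₀ * gw G vv ε := by
    rw [← gw_add hclique, add_comm, gw_add hclique]
  calc _ = gw G vv ε₀ * gw G vv ε * z * (gw G vv ε * gw G vv ε₀) := by group
    _ = _ := by rw [hcomm, gw_add hclique]

theorem gw_conj_gw_conj (hclique : Pairwise (G.Adj on vv)) (ε : Fin k → ZMod 2) (z : RACG G) :
    gw G vv ε * (gw G vv ε * z * gw G vv ε) * gw G vv ε = z := by
  simp [gw_mul_gw_conj hclique, zmod_two_pi_add_self]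

theorem exists_gw_conj_eq_forall_not_adj (hclique : Pairwise (G.Adj on vv))
    (ε : Fin k → ZMod 2) (u : V) :
    ∃ ε' : Fin k → ZMod 2, (∀ i, ε' i = 1 → ¬ G.Adj (vv i) u) ∧
      gw G vv ε * of u * gw G vv ε = gw G vv ε' * of u * gw G vv ε' := by
  classical
  let ε' : Fin k → ZMod 2 := fun i => if G.Adj (vv i) u then 0 else ε i
  let δ : Fin k → ZMod 2 := fun i => if G.Adj (vv i) u then ε i else 0
  refine ⟨ε', fun i hi hadj => by simp [ε', hadj] at hi, ?_⟩
  have hsplit : ε' + δ = ε := funext fun i => by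
    by_cases h : G.Adj (vv i) u <;> simp [ε', δ, h]
  have hδ : Commute (gw G vv δ) (of u) := commute_gw_of fun i hi => by
    by_contra h
    simp [δ, h] at hi
  rw [← hsplit, ← gw_mul_gw_conj hclique, hδ.eq, mul_assoc (of u), gw_mul_self hclique,
    mul_one]

theorem gw_conj_of_mem_RSet (hinj : Injective vv) (hclique : Pairwise (G.Adj on vv)) {v : V}
    (hv : v ∉ Set.range vv) (ε : Fin k → ZMod 2) :
    gw G vv ε * of v * gw G vv ε ∈ RSet G vv := by
  obtain ⟨ε', hna, heq⟩ := exists_gw_conj_eq_forall_not_adj hclique ε v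
  exact ⟨ε', v, hv, isReducedPair_of_forall_not_adj hinj hv hna, heq⟩

theorem of_mem_RSet (hinj : Injective vv) (hclique : Pairwise (G.Adj on vv)) {v : V}
    (hv : v ∉ Set.range vv) : of v ∈ RSet G vv := by
  simpa using gw_conj_of_mem_RSet hinj hclique hv 0

theorem gw_conj_mem_RSet (hinj : Injective vv) (hclique : Pairwise (G.Adj on vv))
    (ε₀ : Fin k → ZMod 2) {x : RACG G} (hx : x ∈ RSet G vv) :
    gw G vv ε₀ * x * gw G vv ε₀ ∈ RSet G vv := by
  obtain ⟨ε, v, hv, -, rfl⟩ := hx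
  rw [gw_mul_gw_conj hclique]
  exact gw_conj_of_mem_RSet hinj hclique hv _

end ConjugatesInR

theorem SemidirectProduct.commute_inl_inr {N H : Type*} [Group N] [Group H]
    {φ : H →* MulAut N} {n : N} {q : H} (h : φ q n = n) :
    Commute (inl n : N ⋊[φ] H) (inr q) := by
  have := inl_aut (φ := φ) q n
  rw [h, map_inv] at this
  exact eq_mul_inv_iff_mul_eq.1 this

section GammaPrime

variable {V : Type} {G : SimpleGraph V} {k : ℕ} {vv : Fin k → V}
  (hinj : Injective vv) (hclique : Pairwise (G.Adj on vv))

def gammaPrimeHom : RACG (gammaPrime G vv) →* RACG G :=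
  RACG.lift (fun x => (x : RACG G))
    (fun x => by
      obtain ⟨ε, v, -, -, hx⟩ := x.2
      rw [hx, gw_mul_mul_gw_eq_conj hclique, ← map_mul, RACG.of_mul_self, map_one])
    fun x y ⟨_, ε, u, u', _, _, huu', hx, hy⟩ => by
      rw [hx, hy, gw_mul_mul_gw_eq_conj hclique, gw_mul_mul_gw_eq_conj hclique]
      exact (RACG.commute_of_adj huu').map _

@[simp]
theorem gammaPrimeHom_of (x : RSet G vv) : gammaPrimeHom hclique (of x) = x :=
  RACG.lift_of _ _ _ x

theorem gammaPrime_adj_gw_conj (ε : Fin k → ZMod 2) {x y : RSet G vv}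
    (h : (gammaPrime G vv).Adj x y) :
    (gammaPrime G vv).Adj ⟨gw G vv ε * x * gw G vv ε, gw_conj_mem_RSet hinj hclique ε x.2⟩
      ⟨gw G vv ε * y * gw G vv ε, gw_conj_mem_RSet hinj hclique ε y.2⟩ := by
  obtain ⟨hne, ε', u, u', hu, hu', huu', hx, hy⟩ := h
  refine ⟨fun hxy => hne (Subtype.ext (by simpa using hxy)), ε + ε', u, u', hu, hu', huu',
    ?_, ?_⟩
  · show gw G vv ε * x * gw G vv ε = _
    rw [hx, gw_mul_gw_conj hclique]
  · show gw G vv ε * y * gw G vv ε = _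
    rw [hy, gw_mul_gw_conj hclique]

def conjIso (ε : Fin k → ZMod 2) : gammaPrime G vv ≃g gammaPrime G vv where
  toFun x := ⟨gw G vv ε * x * gw G vv ε, gw_conj_mem_RSet hinj hclique ε x.2⟩
  invFun x := ⟨gw G vv ε * x * gw G vv ε, gw_conj_mem_RSet hinj hclique ε x.2⟩
  left_inv x := Subtype.ext (gw_conj_gw_conj hclique ε x)
  right_inv x := Subtype.ext (gw_conj_gw_conj hclique ε x)
  map_rel_iff' {x y} := ⟨fun h => by
    simpa [gw_conj_gw_conj hclique] using gammaPrime_adj_gw_conj hinj hclique ε h,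
    gammaPrime_adj_gw_conj hinj hclique ε⟩

def conjHom : Multiplicative (Fin k → ZMod 2) →* (gammaPrime G vv ≃g gammaPrime G vv) where
  toFun q := conjIso hinj hclique q.toAdd
  map_one' := RelIso.ext fun x => Subtype.ext (by simp [conjIso])
  map_mul' q q' := RelIso.ext fun x => Subtype.ext (by
    simp [conjIso, gw_mul_gw_conj hclique])

end GammaPrime

open SemidirectProduct

section Decomposition

variable {V : Type} {G : SimpleGraph V} {k : ℕ} {vv : Fin k → V}
  (hinj : Injective vv) (hclique : Pairwise (G.Adj on vv))

def conjAction : Multiplicative (Fin k → ZMod 2) →* MulAut (RACG (gammaPrime G vv)) :=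
  RACG.autHom.comp (conjHom hinj hclique)

theorem conjAction_of (q : Multiplicative (Fin k → ZMod 2)) (x : RSet G vv) :
    conjAction hinj hclique q (of x) = of (conjIso hinj hclique q.toAdd x) :=
  RACG.autHom_of _ x

theorem conjAction_single_of_adj {i : Fin k} {u : V} (hu : u ∉ Set.range vv)
    (hadj : G.Adj (vv i) u) :
    conjAction hinj hclique (.ofAdd (Pi.single i 1)) (of ⟨of u, of_mem_RSet hinj hclique hu⟩) =
      of ⟨of u, of_mem_RSet hinj hclique hu⟩ := by
  rw [conjAction_of]
  congr 1
  refine Subtype.ext ?_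
  show gw G vv (Pi.single i 1) * of u * gw G vv (Pi.single i 1) = of u
  rw [gw_single, (RACG.commute_of_adj hadj).eq, mul_assoc, RACG.of_mul_self, mul_one]

open scoped Classical in
noncomputable def toSemidirectGen (u : V) :
    RACG (gammaPrime G vv) ⋊[conjAction hinj hclique] Multiplicative (Fin k → ZMod 2) :=
  if h : u ∈ Set.range vv then
    inr (.ofAdd (Pi.single ((Equiv.ofInjective vv hinj).symm ⟨u, h⟩) 1))
  else inl (of ⟨of u, of_mem_RSet hinj hclique h⟩)

theorem toSemidirectGen_vv (i : Fin k) :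
    toSemidirectGen hinj hclique (vv i) = inr (.ofAdd (Pi.single i 1)) := by
  rw [toSemidirectGen, dif_pos ⟨i, rfl⟩, Equiv.ofInjective_symm_apply]

theorem toSemidirectGen_of_notMem {u : V} (hu : u ∉ Set.range vv) :
    toSemidirectGen hinj hclique u = inl (of ⟨of u, of_mem_RSet hinj hclique hu⟩) :=
  dif_neg hu

theorem toSemidirectGen_mul_self (u : V) :
    toSemidirectGen hinj hclique u * toSemidirectGen hinj hclique u = 1 := by
  by_cases hu : u ∈ Set.range vv
  · obtain ⟨i, rfl⟩ := hu
    rw [toSemidirectGen_vv, ← map_mul, ← ofAdd_add, zmod_two_pi_add_self, ofAdd_zero, map_one]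
  · rw [toSemidirectGen_of_notMem hinj hclique hu, ← map_mul, RACG.of_mul_self, map_one]

theorem commute_toSemidirectGen {u u' : V} (huu' : G.Adj u u') :
    Commute (toSemidirectGen hinj hclique u) (toSemidirectGen hinj hclique u') := by
  by_cases hu : u ∈ Set.range vv <;> by_cases hu' : u' ∈ Set.range vv
  · obtain ⟨i, rfl⟩ := hu
    obtain ⟨j, rfl⟩ := hu'
    rw [toSemidirectGen_vv, toSemidirectGen_vv]
    exact (Commute.all _ _).map inr
  · obtain ⟨i, rfl⟩ := hu
    rw [toSemidirectGen_vv, toSemidirectGen_of_notMem hinj hclique hu']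
    exact (commute_inl_inr (conjAction_single_of_adj hinj hclique hu' huu')).symm
  · obtain ⟨j, rfl⟩ := hu'
    rw [toSemidirectGen_vv, toSemidirectGen_of_notMem hinj hclique hu]
    exact commute_inl_inr (conjAction_single_of_adj hinj hclique hu huu'.symm)
  · rw [toSemidirectGen_of_notMem hinj hclique hu, toSemidirectGen_of_notMem hinj hclique hu']
    have hadj : (gammaPrime G vv).Adj ⟨of u, of_mem_RSet hinj hclique hu⟩
        ⟨of u', of_mem_RSet hinj hclique hu'⟩ :=
      ⟨fun h => huu'.ne (RACG.of_injective (congrArg Subtype.val h)), 0, u, u', hu, hu', huu',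
        by simp, by simp⟩
    exact (RACG.commute_of_adj hadj).map inl

noncomputable def toSemidirect :
    RACG G →*
      RACG (gammaPrime G vv) ⋊[conjAction hinj hclique] Multiplicative (Fin k → ZMod 2) :=
  RACG.lift (toSemidirectGen hinj hclique) (toSemidirectGen_mul_self hinj hclique)
    fun _ _ => commute_toSemidirectGen hinj hclique

theorem toSemidirect_of (u : V) :
    toSemidirect hinj hclique (of u) = toSemidirectGen hinj hclique u :=
  RACG.lift_of _ _ _ u

theorem toSemidirect_gw (ε : Fin k → ZMod 2) :
    toSemidirect hinj hclique (gw G vv ε) = inr (.ofAdd ε) :=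
  map_gw hclique (fun i => by rw [toSemidirect_of, toSemidirectGen_vv]) ε

def ofSemidirect :
    RACG (gammaPrime G vv) ⋊[conjAction hinj hclique] Multiplicative (Fin k → ZMod 2) →*
      RACG G :=
  SemidirectProduct.lift (gammaPrimeHom hclique) (gwHom hclique) fun q =>
    PresentedGroup.ext fun x => by
      simp [conjAction_of, conjIso, gwHom, gw_mul_mul_gw_eq_conj hclique]

theorem ofSemidirect_comp_toSemidirect :
    (ofSemidirect hinj hclique).comp (toSemidirect hinj hclique) = MonoidHom.id (RACG G) :=
  PresentedGroup.ext fun u => by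
    by_cases hu : u ∈ Set.range vv
    · obtain ⟨i, rfl⟩ := hu
      simp [toSemidirect_of, toSemidirectGen_vv, ofSemidirect, gwHom, gw_single]
    · simp [toSemidirect_of, toSemidirectGen_of_notMem hinj hclique hu, ofSemidirect]

theorem toSemidirect_comp_gammaPrimeHom :
    (toSemidirect hinj hclique).comp (gammaPrimeHom hclique) = inl :=
  PresentedGroup.ext fun x => by
    obtain ⟨ε, v, hv, -, hx⟩ := x.2
    have hconj : conjIso hinj hclique ε ⟨of v, of_mem_RSet hinj hclique hv⟩ = x :=
      Subtype.ext hx.symm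
    rw [MonoidHom.comp_apply, gammaPrimeHom_of, hx, map_mul, map_mul, toSemidirect_gw,
      toSemidirect_of, toSemidirectGen_of_notMem hinj hclique hv]
    have hinv : (Multiplicative.ofAdd ε)⁻¹ = .ofAdd ε := inv_eq_of_mul_eq_one_right <| by
      rw [← ofAdd_add, zmod_two_pi_add_self, ofAdd_zero]
    nth_rewrite 2 [← hinv]
    rw [← inl_aut, conjAction_of, toAdd_ofAdd, hconj]

end Decomposition

section Kernel

variable {V : Type} {G : SimpleGraph V} {k : ℕ} {vv : Fin k → V}

theorem gammaPrimeHom_injective (hinj : Injective vv) (hclique : Pairwise (G.Adj on vv)) :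
    Injective (gammaPrimeHom hclique) :=
  Injective.of_comp (f := toSemidirect hinj hclique) <| by
    rw [← MonoidHom.coe_comp, toSemidirect_comp_gammaPrimeHom]
    exact inl_injective

/-- `rightHom ∘ toSemidirect` kills the generators outside `K` and fixes those in `K`, so it
factors through `φ`. -/
theorem rightHom_toSemidirect_eq_one_of_mem_ker (hinj : Injective vv)
    (hclique : Pairwise (G.Adj on vv)) (φ : RACG G →* RACG (G.induce (Set.range vv)))
    (hφ1 : ∀ i : Fin k, φ (of (vv i)) = of (⟨vv i, Set.mem_range_self i⟩ : Set.range vv))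
    (hφ2 : ∀ v : V, v ∉ Set.range vv → φ (of v) = 1) {y : RACG G} (hy : y ∈ φ.ker) :
    rightHom (toSemidirect hinj hclique y) = 1 := by
  let ρ := rightHom.comp (toSemidirect hinj hclique)
  have hρ :
      ρ = (ρ.comp (RACG.map (SimpleGraph.Embedding.induce (Set.range vv)).toHom)).comp φ :=
    PresentedGroup.ext fun u => by
      by_cases hu : u ∈ Set.range vv
      · obtain ⟨i, rfl⟩ := hu
        simp [ρ, hφ1]
      · simp [ρ, hφ2 u hu, toSemidirect_of, toSemidirectGen_of_notMem hinj hclique hu]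
  have := DFunLike.congr_fun hρ y
  simpa [ρ, MonoidHom.mem_ker.1 hy] using this

theorem range_gammaPrimeHom_eq_ker (hinj : Injective vv) (hclique : Pairwise (G.Adj on vv))
    (φ : RACG G →* RACG (G.induce (Set.range vv)))
    (hφ1 : ∀ i : Fin k, φ (of (vv i)) = of (⟨vv i, Set.mem_range_self i⟩ : Set.range vv))
    (hφ2 : ∀ v : V, v ∉ Set.range vv → φ (of v) = 1) :
    (gammaPrimeHom hclique).range = φ.ker := by
  refine le_antisymm ?_ fun y hy => ?_
  · rintro _ ⟨n, rfl⟩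
    have hφψ : φ.comp (gammaPrimeHom hclique) = 1 := PresentedGroup.ext fun x => by
      obtain ⟨ε, v, hv, -, hx⟩ := x.2
      rw [MonoidHom.comp_apply, gammaPrimeHom_of, hx, map_mul, map_mul, hφ2 v hv, mul_one,
        ← map_mul, gw_mul_self hclique, map_one, MonoidHom.one_apply]
    exact DFunLike.congr_fun hφψ n
  · obtain ⟨n, hn⟩ :
        toSemidirect hinj hclique y ∈ (inl : _ →* _ ⋊[conjAction hinj hclique] _).range := by
      rw [range_inl_eq_ker_rightHom]
      exact rightHom_toSemidirect_eq_one_of_mem_ker hinj hclique φ hφ1 hφ2 hy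
    refine ⟨n, ?_⟩
    calc gammaPrimeHom hclique n = ofSemidirect hinj hclique (inl n) := (lift_inl _ _ _ n).symm
      _ = y := by
        rw [hn, ← MonoidHom.comp_apply, ofSemidirect_comp_toSemidirect, MonoidHom.id_apply]

end Kernel

theorem racg_gammaPrime_iso_ker_general {V : Type} (G : SimpleGraph V)
    (k : ℕ) (vv : Fin k → V) (hinj : Function.Injective vv)
    (hclique : ∀ i j : Fin k, i ≠ j → G.Adj (vv i) (vv j))
    (φ : RACG G →* RACG (G.induce (Set.range vv)))
    (hφ1 : ∀ i : Fin k, φ (PresentedGroup.of (vv i)) =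
      PresentedGroup.of (⟨vv i, Set.mem_range_self i⟩ : ↥(Set.range vv)))
    (hφ2 : ∀ v : V, v ∉ Set.range vv → φ (PresentedGroup.of v) = 1) :
    (∃ e : RACG (gammaPrime G vv) ≃* φ.ker,
      ∀ x : ↥(RSet G vv), ((e (PresentedGroup.of x) : φ.ker) : RACG G) = (x : RACG G)) ∧
    φ.ker.FiniteIndex := by
  refine ⟨⟨(MonoidHom.ofInjective (gammaPrimeHom_injective hinj hclique)).trans
    (MulEquiv.subgroupCongr (range_gammaPrimeHom_eq_ker hinj hclique φ hφ1 hφ2)),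
    fun x => gammaPrimeHom_of hclique x⟩, ?_⟩
  have : Finite (RACG (G.induce (Set.range vv))) :=
    RACG.finite_of_pairwise_adj (pairwise_adj_induce_range hclique)
  exact Subgroup.finiteIndex_ker φ

/-- the map `v(ε) ↦ g(ε) v g(ε)` extends to a group isomorphism
`W_{Γ'} ≃ ker φ`, where `φ : W_Γ →* W_K` is the retraction onto the clique
`K = {v₁, …, v_k}`; since `ker φ` has finite index in `W_Γ`, the groups `W_Γ` and `W_{Γ'}`
are commensurable. -/
theorem racg_gammaPrime_iso_ker {V : Type} [Fintype V] (G : SimpleGraph V)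
    (k : ℕ) (vv : Fin k → V) (hinj : Function.Injective vv)
    (hclique : ∀ i j : Fin k, i ≠ j → G.Adj (vv i) (vv j))
    (φ : RACG G →* RACG (G.induce (Set.range vv)))
    (hφ1 : ∀ i : Fin k, φ (PresentedGroup.of (vv i)) =
      PresentedGroup.of (⟨vv i, Set.mem_range_self i⟩ : ↥(Set.range vv)))
    (hφ2 : ∀ v : V, v ∉ Set.range vv → φ (PresentedGroup.of v) = 1) :
    (∃ e : RACG (gammaPrime G vv) ≃* φ.ker,
      ∀ x : ↥(RSet G vv), ((e (PresentedGroup.of x) : φ.ker) : RACG G) = (x : RACG G)) ∧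
    φ.ker.FiniteIndex :=
  racg_gammaPrime_iso_ker_general G k vv hinj hclique φ hφ1 hφ2
end
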